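/- arXiv:1505.01555 — 5 statements merged into one kernel-verified Lean document; each statement's English description precedes it below -/
import Mathlib

section
/- Let r > e^{-2} be a real number. Then the function f(x) = x·e^x + r·x is strictly increasing on ℝ and is a bijection from ℝ onto ℝ; consequently, for every real number n the equation x·e^x + r·x = n has exactly one real solution. -/
open Real Filter

private lemma rL_key (x : ℝ) : Real.exp x * (1 + x) + Real.exp (-2) ≥ 0 := by
  have h : 1 - (x + 2) ≤ Real.exp (-(x + 2)) := by
    have := Real.add_one_le_exp (-(x + 2)); linarith
  have h2 : Real.exp (x + 2) * (1 - (x + 2)) ≤ 1 := by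
    calc Real.exp (x + 2) * (1 - (x + 2)) ≤ Real.exp (x + 2) * Real.exp (-(x + 2)) :=
          mul_le_mul_of_nonneg_left h (Real.exp_pos _).le
      _ = 1 := by rw [← Real.exp_add, add_neg_cancel, Real.exp_zero]
  have hx : Real.exp x = Real.exp (-2) * Real.exp (x + 2) := by
    rw [← Real.exp_add]; ring_nf
  have h3 : Real.exp (-2) * (Real.exp (x + 2) * (1 - (x + 2))) ≤ Real.exp (-2) * 1 :=
    mul_le_mul_of_nonneg_left h2 (Real.exp_pos _).le
  nlinarith [Real.exp_pos (-2), Real.exp_pos (x + 2)]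

/-- For `r > e^{-2}` the map `x ↦ x e^x + r x` is strictly increasing and a bijection
of `ℝ`, so `x e^x + r x = n` has a unique real solution for every `n`. -/
theorem rLambert_unique_branch (r : ℝ) (hr : Real.exp (-2) < r) :
    StrictMono (fun x : ℝ => x * Real.exp x + r * x) ∧
    Function.Bijective (fun x : ℝ => x * Real.exp x + r * x) ∧
    ∀ n : ℝ, ∃! x : ℝ, x * Real.exp x + r * x = n := by
  set f : ℝ → ℝ := fun x => x * Real.exp x + r * x with hf
  have hr0 : 0 < r := lt_trans (Real.exp_pos _) hr
  have hderiv : ∀ x : ℝ, HasDerivAt f (Real.exp x * (1 + x) + r) x := by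
    intro x
    have h1 : HasDerivAt (fun x : ℝ => x * Real.exp x) (1 * Real.exp x + x * Real.exp x) x :=
      (hasDerivAt_id x).mul (Real.hasDerivAt_exp x)
    have h2 : HasDerivAt (fun x : ℝ => r * x) r x := by
      simpa using (hasDerivAt_id x).const_mul r
    have := h1.add h2
    exact this.congr_deriv (by ring)
  have hcont : Continuous f := by
    fun_prop
  have hmono : StrictMono f := by
    apply strictMono_of_deriv_pos
    intro x
    rw [(hderiv x).deriv]
    have := rL_key x
    linarith
  have htop : Tendsto f atTop atTop := by
    apply tendsto_atTop_mono' _ (_ : ∀ᶠ x in atTop, r * x ≤ f x)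
    · exact (tendsto_id.const_mul_atTop hr0)
    · filter_upwards [eventually_ge_atTop (0 : ℝ)] with x hx
      have : 0 ≤ x * Real.exp x := mul_nonneg hx (Real.exp_pos _).le
      simp only [hf]; linarith
  have hbot : Tendsto f atBot atBot := by
    apply tendsto_atBot_mono' _ (_ : ∀ᶠ x in atBot, f x ≤ r * x)
    · exact (tendsto_id.const_mul_atBot hr0)
    · filter_upwards [eventually_le_atBot (0 : ℝ)] with x hx
      have : x * Real.exp x ≤ 0 := mul_nonpos_of_nonpos_of_nonneg hx (Real.exp_pos _).le
      simp only [hf]; linarith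
  have hsurj : Function.Surjective f := hcont.surjective htop hbot
  refine ⟨hmono, ⟨hmono.injective, hsurj⟩, ?_⟩
  intro n
  obtain ⟨x, hx⟩ := hsurj n
  exact ⟨x, hx, fun y hy => hmono.injective (hy.trans hx.symm)⟩
end

section
/- Let n > 0 be a real number. For every r ≥ 0 there is a unique x > 0 with x·e^x + r·x = n; denote it x_r. Then as r → 0⁺, x_r converges to the unique positive real number w satisfying w·e^w = n. -/
open Filter

lemma rl_mono : StrictMonoOn (fun x : ℝ => x * Real.exp x) (Set.Ici 0) := by
  intro a ha b _ hab
  exact mul_lt_mul'' hab (Real.exp_lt_exp.2 hab) ha (Real.exp_nonneg a)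

lemma rl_exists_unique (n : ℝ) (hn : 0 < n) (r : ℝ) (hr : 0 ≤ r) :
    ∃! x : ℝ, 0 < x ∧ x * Real.exp x + r * x = n := by
  have hmono : StrictMonoOn (fun x : ℝ => x * Real.exp x + r * x) (Set.Ici 0) := by
    intro a ha b hb hab
    exact add_lt_add_of_lt_of_le (rl_mono ha hb hab)
      (mul_le_mul_of_nonneg_left hab.le hr)
  have hcont : Continuous (fun x : ℝ => x * Real.exp x + r * x) := by fun_prop
  have h0 : (fun x : ℝ => x * Real.exp x + r * x) 0 = 0 := by simp
  have hb : n ≤ (fun x : ℝ => x * Real.exp x + r * x) n := by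
    simp only
    nlinarith [Real.one_le_exp hn.le, mul_nonneg hr hn.le]
  have hmem : n ∈ Set.Icc ((fun x : ℝ => x * Real.exp x + r * x) 0)
      ((fun x : ℝ => x * Real.exp x + r * x) n) := by
    rw [h0]; exact ⟨hn.le, hb⟩
  obtain ⟨x, hx, hfx⟩ := intermediate_value_Icc hn.le hcont.continuousOn hmem
  have hxpos : 0 < x := by
    rcases hx.1.lt_or_eq with h | h
    · exact h
    · exfalso; rw [← h] at hfx; simp at hfx; linarith
  refine ⟨x, ⟨hxpos, hfx⟩, ?_⟩
  rintro y ⟨hy, hfy⟩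
  exact hmono.injOn (Set.mem_Ici.2 hy.le) (Set.mem_Ici.2 hxpos.le) (by simp only at hfx ⊢; rw [hfy, hfx])

/-- For `n > 0`: for every `r ≥ 0` the equation `x e^x + r x = n` has a unique positive
solution `x_r`, there is a unique positive `w` with `w e^w = n`, and `x_r → w` as
`r → 0⁺`. -/
theorem rLambert_tendsto_lambert (n : ℝ) (hn : 0 < n) :
    (∀ r : ℝ, 0 ≤ r → ∃! x : ℝ, 0 < x ∧ x * Real.exp x + r * x = n) ∧
    (∃! w : ℝ, 0 < w ∧ w * Real.exp w = n) ∧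
    (∀ xr : ℝ → ℝ,
      (∀ r : ℝ, 0 ≤ r → 0 < xr r ∧ xr r * Real.exp (xr r) + r * xr r = n) →
      ∀ w : ℝ, 0 < w → w * Real.exp w = n →
        Tendsto xr (nhdsWithin 0 (Set.Ioi 0)) (nhds w)) := by
  refine ⟨fun r hr => rl_exists_unique n hn r hr, ?_, ?_⟩
  · have := rl_exists_unique n hn 0 le_rfl
    simpa using this
  · intro xr hxr w hw hwe
    have hew : (0:ℝ) < Real.exp w := Real.exp_pos w
    -- bounds
    have hbd : ∀ r : ℝ, 0 < r → (n - r * w) / Real.exp w ≤ xr r ∧ xr r ≤ w := by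
      intro r hr
      obtain ⟨hxp, hxe⟩ := hxr r hr.le
      have hle : xr r ≤ w := by
        by_contra h
        push_neg at h
        have := rl_mono (Set.mem_Ici.2 hw.le) (Set.mem_Ici.2 hxp.le) h
        simp only at this
        nlinarith [mul_pos hr hxp]
      refine ⟨?_, hle⟩
      rw [div_le_iff₀ hew]
      have h1 : xr r * Real.exp (xr r) ≤ xr r * Real.exp w :=
        mul_le_mul_of_nonneg_left (Real.exp_le_exp.2 hle) hxp.le
      nlinarith [mul_le_mul_of_nonneg_left hle hr.le]
    have hg : Tendsto (fun r : ℝ => (n - r * w) / Real.exp w)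
        (nhdsWithin 0 (Set.Ioi 0)) (nhds w) := by
      have hc : Continuous (fun r : ℝ => (n - r * w) / Real.exp w) := by fun_prop
      have := (hc.tendsto 0).mono_left (nhdsWithin_le_nhds (s := Set.Ioi (0:ℝ)))
      simpa [← hwe, mul_div_assoc, mul_div_cancel_right₀ _ hew.ne'] using this
    refine tendsto_of_tendsto_of_tendsto_of_le_of_le' hg tendsto_const_nhds ?_ ?_
    · filter_upwards [self_mem_nhdsWithin] with r hr using (hbd r hr).1
    · filter_upwards [self_mem_nhdsWithin] with r hr using (hbd r hr).2
end

section
/- Let r > e^{-2} be a real number and for each real x let W_r(x) denote the unique real solution y of y·e^y + r·y = x. Then W_r(x) - (log x + log(1/log x - r/x)) → 0 as x → +∞. -/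
open Filter Real

lemma rLambert_fmono (r : ℝ) (hr : Real.exp (-2) < r) :
    StrictMono (fun y : ℝ => y * Real.exp y + r * y) := by
  have hd : ∀ y : ℝ, HasDerivAt (fun y : ℝ => y * Real.exp y + r * y)
      (Real.exp y * (1 + y) + r) y := by
    intro y
    have h1 : HasDerivAt (fun y : ℝ => y * Real.exp y) (1 * Real.exp y + y * Real.exp y) y :=
      (hasDerivAt_id y).mul (Real.hasDerivAt_exp y)
    have h2 : HasDerivAt (fun y : ℝ => r * y) (r * 1) y := (hasDerivAt_id y).const_mul r
    exact (h1.add h2).congr_deriv (by ring)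
  have hpos : ∀ y : ℝ, 0 < Real.exp y * (1 + y) + r := by
    intro y
    rcases le_or_gt (-1) y with h | h
    · have h0 : 0 ≤ Real.exp y * (1 + y) := mul_nonneg (Real.exp_pos y).le (by linarith)
      have := Real.exp_pos (-2)
      linarith
    · have key : -(1 + y) ≤ Real.exp (-(1 + y) - 1) := by
        have := Real.add_one_le_exp (-(1 + y) - 1)
        linarith
      have h3 : Real.exp y * (-(1 + y)) ≤ Real.exp y * Real.exp (-(1 + y) - 1) :=
        mul_le_mul_of_nonneg_left key (Real.exp_pos _).le
      have h4 : Real.exp y * Real.exp (-(1 + y) - 1) = Real.exp (-2) := by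
        rw [← Real.exp_add]; ring_nf
      nlinarith [Real.exp_pos y]
  exact strictMono_of_deriv_pos fun y => by rw [(hd y).deriv]; exact hpos y

/-- Asymptotics of the `r`-Lambert function at `+∞`:
`W_r(x) ∼ log x + log(1/log x - r/x)` as `x → +∞`. -/
theorem rLambert_asymptotics_atTop (r : ℝ) (hr : Real.exp (-2) < r)
    (Wr : ℝ → ℝ) (hWr : ∀ x : ℝ, Wr x * Real.exp (Wr x) + r * Wr x = x) :
    Tendsto (fun x : ℝ => Wr x - (Real.log x + Real.log (1 / Real.log x - r / x)))
      atTop (nhds 0) := by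
  have hmono := rLambert_fmono r hr
  set A : ℝ → ℝ := fun x => 1 / Real.log x - r / x with hA
  set g : ℝ → ℝ := fun x => Real.log x + Real.log (A x) with hg
  clear_value A g
  -- basic limits
  have t1 : Tendsto (fun x : ℝ => Real.log x / x) atTop (nhds 0) :=
    Real.isLittleO_log_id_atTop.tendsto_div_nhds_zero
  have tlog : Tendsto Real.log atTop atTop := Real.tendsto_log_atTop
  have t2 : Tendsto (fun x : ℝ => Real.log (Real.log x) / Real.log x) atTop (nhds 0) :=
    t1.comp tlog
  have hLpos : ∀ᶠ x : ℝ in atTop, 0 < Real.log x := tlog.eventually_gt_atTop 0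
  have hxpos : ∀ᶠ x : ℝ in atTop, (0 : ℝ) < x := eventually_gt_atTop 0
  -- log x * A x → 1
  have hLA : Tendsto (fun x : ℝ => Real.log x * A x) atTop (nhds 1) := by
    have heq : ∀ᶠ x : ℝ in atTop, 1 - r * (Real.log x / x) = Real.log x * A x := by
      filter_upwards [hLpos, hxpos] with x h1 h2
      have h1' : Real.log x ≠ 0 := ne_of_gt h1
      have h2' : x ≠ 0 := ne_of_gt h2
      simp only [hA]
      field_simp
    have : Tendsto (fun x : ℝ => 1 - r * (Real.log x / x)) atTop (nhds (1 - r * 0)) :=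
      tendsto_const_nhds.sub ((t1.const_mul r))
    rw [mul_zero, sub_zero] at this
    exact this.congr' heq
  have hApos : ∀ᶠ x : ℝ in atTop, 0 < A x := by
    have h12 : ∀ᶠ x : ℝ in atTop, (1/2 : ℝ) < Real.log x * A x :=
      hLA.eventually (lt_mem_nhds (by norm_num : (1/2 : ℝ) < 1))
    filter_upwards [h12, hLpos] with x h1 h2
    rcases lt_or_ge 0 (A x) with h | h
    · exact h
    · exfalso; nlinarith [mul_nonpos_of_nonneg_of_nonpos h2.le h]
  -- log (A x) / log x → 0
  have hlogA : Tendsto (fun x : ℝ => Real.log (A x) / Real.log x) atTop (nhds 0) := by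
    have hLAlog : Tendsto (fun x : ℝ => Real.log (Real.log x * A x)) atTop (nhds 0) := by
      have hcont : Tendsto Real.log (nhds (1 : ℝ)) (nhds 0) := by
        have := (Real.continuousAt_log (one_ne_zero)).tendsto
        rwa [Real.log_one] at this
      exact hcont.comp hLA
    have hinvL : Tendsto (fun x : ℝ => (Real.log x)⁻¹) atTop (nhds 0) :=
      tendsto_inv_atTop_zero.comp tlog
    have hmul : Tendsto (fun x : ℝ =>
        Real.log (Real.log x * A x) * (Real.log x)⁻¹ - Real.log (Real.log x) / Real.log x)
        atTop (nhds 0) := by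
      have := (hLAlog.mul hinvL).sub t2
      simpa using this
    refine hmul.congr' ?_
    filter_upwards [hLpos, hApos] with x h1 h2
    have h1' : Real.log x ≠ 0 := ne_of_gt h1
    have hAx : Real.log (Real.log x * A x) = Real.log (Real.log x) + Real.log (A x) :=
      Real.log_mul h1' (ne_of_gt h2)
    rw [hAx]
    field_simp
    ring
  -- (g x + t)/log x → 1 for each t
  have hgL : ∀ t : ℝ, Tendsto (fun x : ℝ => (g x + t) / Real.log x) atTop (nhds 1) := by
    intro t
    have hinvL : Tendsto (fun x : ℝ => (Real.log x)⁻¹) atTop (nhds 0) :=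
      tendsto_inv_atTop_zero.comp tlog
    have : Tendsto (fun x : ℝ => 1 + Real.log (A x) / Real.log x + t * (Real.log x)⁻¹)
        atTop (nhds (1 + 0 + t * 0)) :=
      (tendsto_const_nhds.add hlogA).add (hinvL.const_mul t)
    rw [mul_zero, add_zero, add_zero] at this
    refine this.congr' ?_
    filter_upwards [hLpos] with x h1
    have h1' : Real.log x ≠ 0 := ne_of_gt h1
    simp only [hg]
    field_simp
  -- key limit
  have hkey : ∀ t : ℝ, Tendsto (fun x : ℝ => (g x + t) * (Real.exp t * A x + r / x))
      atTop (nhds (Real.exp t)) := by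
    intro t
    have h2 : Tendsto (fun x : ℝ => Real.exp t * (Real.log x * A x) + r * (Real.log x / x))
        atTop (nhds (Real.exp t * 1 + r * 0)) :=
      (hLA.const_mul (Real.exp t)).add (t1.const_mul r)
    rw [mul_one, mul_zero, add_zero] at h2
    have h3 := (hgL t).mul h2
    rw [one_mul] at h3
    refine h3.congr' ?_
    filter_upwards [hLpos, hxpos] with x h1 hx
    have h1' : Real.log x ≠ 0 := ne_of_gt h1
    have hx' : x ≠ 0 := ne_of_gt hx
    field_simp
  -- identity f (g x + t) = x * ((g x + t) * (e^t A x + r/x))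
  have hid : ∀ t : ℝ, ∀ᶠ x : ℝ in atTop,
      (g x + t) * Real.exp (g x + t) + r * (g x + t)
        = x * ((g x + t) * (Real.exp t * A x + r / x)) := by
    intro t
    filter_upwards [hxpos, hApos] with x hx hAx
    have hexp : Real.exp (g x + t) = x * A x * Real.exp t := by
      rw [hg]
      rw [Real.exp_add, Real.exp_add, Real.exp_log hx, Real.exp_log hAx]
    rw [hexp]
    have hx' : x ≠ 0 := ne_of_gt hx
    field_simp
  -- epsilon argument
  rw [NormedAddCommGroup.tendsto_nhds_zero]
  intro ε hε
  have hexpε : (1 : ℝ) < Real.exp ε := by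
    rw [← Real.exp_zero]; exact Real.exp_lt_exp.mpr hε
  have hexpε' : Real.exp (-ε) < 1 := by
    rw [← Real.exp_zero]; exact Real.exp_lt_exp.mpr (by linarith)
  have hup : ∀ᶠ x : ℝ in atTop, Wr x < g x + ε := by
    have h1 : ∀ᶠ x : ℝ in atTop, 1 < (g x + ε) * (Real.exp ε * A x + r / x) :=
      (hkey ε).eventually (lt_mem_nhds hexpε)
    filter_upwards [h1, hid ε, hxpos] with x h1 h2 hx
    have hlt : Wr x * Real.exp (Wr x) + r * Wr x
        < (g x + ε) * Real.exp (g x + ε) + r * (g x + ε) := by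
      rw [hWr x, h2]
      nlinarith
    exact hmono.lt_iff_lt.mp hlt
  have hdown : ∀ᶠ x : ℝ in atTop, g x - ε < Wr x := by
    have h1 : ∀ᶠ x : ℝ in atTop, (g x + -ε) * (Real.exp (-ε) * A x + r / x) < 1 :=
      (hkey (-ε)).eventually (gt_mem_nhds hexpε')
    filter_upwards [h1, hid (-ε), hxpos] with x h1 h2 hx
    have hlt : (g x + -ε) * Real.exp (g x + -ε) + r * (g x + -ε)
        < Wr x * Real.exp (Wr x) + r * Wr x := by
      rw [hWr x, h2]
      nlinarith
    have := hmono.lt_iff_lt.mp hlt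
    linarith
  filter_upwards [hup, hdown] with x h1 h2
  have hgx : Real.log x + Real.log (1 / Real.log x - r / x) = g x := by
    simp only [hg, hA]
  rw [hgx, Real.norm_eq_abs, abs_lt]
  constructor <;> linarith
end

section
/- Let r > e^{-2} be a real number and for each real x let W_r(x) denote the unique real solution y of y·e^y + r·y = x. Then W_r(x) - x/r → 0 as x → -∞; in particular W_r(x)/(x/r) → 1 as x → -∞. -/
open Filter

lemma neg_one_le_mul_exp (y : ℝ) : -1 ≤ y * Real.exp y := by
  rcases le_or_gt 0 y with h | h
  · have := Real.exp_pos y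
    nlinarith
  · have h1 : 1 - y ≤ Real.exp (-y) := by
      have := Real.add_one_le_exp (-y); linarith
    have h2 : Real.exp y ≤ 1 / (1 - y) := by
      rw [show Real.exp y = 1 / Real.exp (-y) by rw [Real.exp_neg, one_div, inv_inv]]
      apply one_div_le_one_div_of_le <;> linarith
    have h3 : -y * Real.exp y ≤ -y * (1 / (1 - y)) := by
      apply mul_le_mul_of_nonneg_left h2; linarith
    have h4 : -y * (1 / (1 - y)) ≤ 1 := by
      rw [mul_one_div, div_le_one (by linarith)]; linarith
    linarith

lemma mul_exp_tendsto_atBot : Tendsto (fun y : ℝ => y * Real.exp y) atBot (nhds 0) := by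
  have h := (Real.tendsto_pow_mul_exp_neg_atTop_nhds_zero 1).comp tendsto_neg_atBot_atTop
  rw [show ((fun x : ℝ => x ^ 1 * Real.exp (-x)) ∘ Neg.neg) = fun y : ℝ => -(y * Real.exp y) by
    funext y
    show (-y) ^ 1 * Real.exp (-(-y)) = -(y * Real.exp y)
    rw [neg_neg]; ring] at h
  simpa using h.neg

/-- Asymptotics of the `r`-Lambert function at `-∞`: `W_r(x) - x/r → 0` and hence
`W_r(x)/(x/r) → 1` as `x → -∞`. -/
theorem rLambert_asymptotics_atBot (r : ℝ) (hr : Real.exp (-2) < r)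
    (Wr : ℝ → ℝ) (hWr : ∀ x : ℝ, Wr x * Real.exp (Wr x) + r * Wr x = x) :
    Tendsto (fun x : ℝ => Wr x - x / r) atBot (nhds 0) ∧
    Tendsto (fun x : ℝ => Wr x / (x / r)) atBot (nhds 1) := by
  have hr0 : (0 : ℝ) < r := lt_trans (Real.exp_pos _) hr
  -- Wr tends to -∞
  have hW : Tendsto Wr atBot atBot := by
    rw [tendsto_atBot]
    intro M
    filter_upwards [eventually_le_atBot (r * M - 1)] with x hx
    have h1 := hWr x
    have h2 := neg_one_le_mul_exp (Wr x)
    have : r * Wr x ≤ r * M := by linarith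
    exact le_of_mul_le_mul_left this hr0
  -- key identity
  have key : ∀ x : ℝ, Wr x - x / r = -(Wr x * Real.exp (Wr x)) / r := by
    intro x
    have h1 := hWr x
    field_simp
    linarith
  have h0 : Tendsto (fun x : ℝ => Wr x - x / r) atBot (nhds 0) := by
    have := (mul_exp_tendsto_atBot.comp hW).neg.div_const r
    simp only [Function.comp] at this
    rw [neg_zero, zero_div] at this
    refine this.congr fun x => ?_
    rw [key x]
  refine ⟨h0, ?_⟩
  have hxr : Tendsto (fun x : ℝ => x / r) atBot atBot :=
    tendsto_id.atBot_div_const hr0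
  have hinv : Tendsto (fun x : ℝ => (x / r)⁻¹) atBot (nhds 0) := by
    have h1 : Tendsto (fun x : ℝ => -(x / r)) atBot atTop := tendsto_neg_atBot_atTop.comp hxr
    have h2 : Tendsto (fun x : ℝ => (-(x / r))⁻¹) atBot (nhds 0) := tendsto_inv_atTop_zero.comp h1
    have h3 := h2.neg
    rw [neg_zero] at h3
    refine h3.congr fun x => ?_
    rw [inv_neg, neg_neg]
  have hprod : Tendsto (fun x : ℝ => (Wr x - x / r) * (x / r)⁻¹) atBot (nhds 0) := by
    simpa using h0.mul hinv
  have := hprod.add_const 1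
  rw [zero_add] at this
  refine this.congr' ?_
  filter_upwards [eventually_lt_atBot (0 : ℝ)] with x hx
  have hxne : x / r ≠ 0 := div_ne_zero (ne_of_lt hx) (ne_of_gt hr0)
  rw [sub_mul, mul_inv_cancel₀ hxne, div_eq_mul_inv]
  ring
end

section
/- Let x ≠ 0 and a be real numbers with a ≠ 1, a ≠ -1, and (a-1)·x + 1 ≠ 0. Then L(x) = a, where L(x) = coth(x) - 1/x is the Langevin function, if and only if u = -2x satisfies e^{-u} = ((a+1)/(a-1)) · (u - 2/(a+1))/(u - 2/(a-1)). -/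
/-- The inverse Langevin function as a generalized Lambert function: for `x ≠ 0`,
`a ≠ ±1` with `(a-1)x + 1 ≠ 0`, the Langevin equation `coth x - 1/x = a` holds iff
`u = -2x` satisfies `e^{-u} = ((a+1)/(a-1)) (u - 2/(a+1))/(u - 2/(a-1))`,
where `coth x = cosh x / sinh x`. -/
theorem langevin_lambert_form (x a : ℝ) (hx : x ≠ 0)
    (ha1 : a ≠ 1) (ha2 : a ≠ -1) (h : (a - 1) * x + 1 ≠ 0) :
    Real.cosh x / Real.sinh x - 1 / x = a ↔
      Real.exp (-(-2 * x)) =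
        ((a + 1) / (a - 1)) * ((-2 * x - 2 / (a + 1)) / (-2 * x - 2 / (a - 1))) := by
  have hE := Real.exp_pos x
  have hEne : Real.exp x ≠ 0 := ne_of_gt hE
  have ha : a - 1 ≠ 0 := sub_ne_zero.mpr ha1
  have hb : a + 1 ≠ 0 := fun hh => ha2 (by linarith)
  have hE2 : Real.exp x * Real.exp x - 1 ≠ 0 := by
    intro hh
    have h0 : Real.exp (2 * x) = Real.exp 0 := by
      rw [Real.exp_zero, two_mul, Real.exp_add]; linarith
    have := Real.exp_injective h0
    exact hx (by linarith)
  have hsinh : Real.sinh x = (Real.exp x * Real.exp x - 1) / (2 * Real.exp x) := by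
    rw [Real.sinh_eq, Real.exp_neg, div_eq_div_iff (by norm_num) (by positivity)]
    field_simp
  have hcosh : Real.cosh x = (Real.exp x * Real.exp x + 1) / (2 * Real.exp x) := by
    rw [Real.cosh_eq, Real.exp_neg, div_eq_div_iff (by norm_num) (by positivity)]
    field_simp
  have hexp2 : Real.exp (-(-2 * x)) = Real.exp x * Real.exp x := by
    rw [show -(-2*x) = x + x by ring, Real.exp_add]
  have hd : -2 * x - 2 / (a - 1) ≠ 0 := by
    intro hh
    apply h
    have h2 : (-2 * x - 2 / (a - 1)) * (a - 1) = 0 := by rw [hh]; ring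
    have h3 : (-2 * x - 2 / (a - 1)) * (a - 1) = -2 * x * (a - 1) - 2 := by
      field_simp
    nlinarith [h3 ▸ h2]
  have hrhs : ((a + 1) / (a - 1)) * ((-2 * x - 2 / (a + 1)) / (-2 * x - 2 / (a - 1)))
      = ((a + 1) * x + 1) / ((a - 1) * x + 1) := by
    rw [div_mul_div_comm, div_eq_div_iff (by positivity) h]
    field_simp
    ring
  have hq : (Real.exp x * Real.exp x + 1) / (2 * Real.exp x) /
      ((Real.exp x * Real.exp x - 1) / (2 * Real.exp x))
      = (Real.exp x * Real.exp x + 1) / (Real.exp x * Real.exp x - 1) := by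
    rw [div_div_div_cancel_right₀]
    positivity
  rw [hsinh, hcosh, hexp2, hrhs, hq,
    div_sub_div _ _ hE2 hx, div_eq_iff (mul_ne_zero hE2 hx), eq_div_iff h]
  constructor
  · intro h'
    linear_combination -h'
  · intro h'
    linear_combination -h'
end
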